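/- Consider the 2×2 system ∂_t u₁ + ∂_x u₁ = 0, ∂_t u₂ − ∂_x u₂ = 0 with boundary conditions u₁(0,t) = g(t), u₂(1,t) = u₁(1,t), where g is continuous, g(t) = 0 for 0 ≤ t ≤ 4 and g(t) ≠ 0 for t > 4. Let Q be the associated propagation operator. Then for every continuous u and every x ∈ [0,1], [Q²u](x, 3) = 0; nevertheless, the continuous solution of the problem satisfies u₁(0,t) = g(t) ≠ 0 for all t > 4, so the problem is not finite-time stabilizable. -/
import Mathlib


open Set

/-- The propagation operator `Q` for the system `∂ₜu₁ + ∂ₓu₁ = 0`,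
`∂ₜu₂ − ∂ₓu₂ = 0` with nonhomogeneous boundary conditions
`u₁(0,t) = g(t)`, `u₂(1,t) = u₁(1,t)` and initial data `φ`. -/
noncomputable def Qg (g : ℝ → ℝ) (φ : ℝ → ℝ × ℝ) (u : ℝ → ℝ → ℝ × ℝ) :
    ℝ → ℝ → ℝ × ℝ := fun x t =>
  (if t < x then (φ (x - t)).1 else g (t - x),
   if t + x < 1 then (φ (x + t)).2 else (u 1 (t + x - 1)).1)

/-- with `g` continuous, vanishing on `[0,4]` and nonzero for `t > 4`,
one has `[Q²u](·, 3) = 0` for every continuous `u`; nevertheless any continuous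
solution (a fixed point of `Q` on `Π`) satisfies `u₁(0,t) = g(t) ≠ 0` for all
`t > 4`, so the problem is not finite-time stabilizable. -/
theorem Qg_sq_vanishes_but_not_FTS (g : ℝ → ℝ) (hg : Continuous g)
    (hg0 : ∀ t : ℝ, 0 ≤ t → t ≤ 4 → g t = 0)
    (hg1 : ∀ t : ℝ, 4 < t → g t ≠ 0) :
    (∀ u : ℝ → ℝ → ℝ × ℝ, Continuous (fun p : ℝ × ℝ => u p.1 p.2) →
      ∀ x ∈ Icc (0:ℝ) 1,
        Qg g (fun y => u y 0) (Qg g (fun y => u y 0) u) x 3 = 0) ∧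
    (∀ u : ℝ → ℝ → ℝ × ℝ,
      (∀ x ∈ Icc (0:ℝ) 1, ∀ t : ℝ, 0 ≤ t → u x t = Qg g (fun y => u y 0) u x t) →
      ∀ t : ℝ, 4 < t → (u 0 t).1 = g t ∧ g t ≠ 0) := by
  constructor
  · intro u hu x hx
    obtain ⟨hx0, hx1⟩ := hx
    have h1 : ¬ (3:ℝ) < x := by linarith
    have h2 : ¬ (3:ℝ) + x < 1 := by linarith
    have h3 : ¬ (3:ℝ) + x - 1 < 1 := by linarith
    unfold Qg
    simp only [if_neg h1, if_neg h2, if_neg h3, Prod.ext_iff, Prod.fst, Prod.snd]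
    exact ⟨hg0 _ (by linarith) (by linarith), hg0 _ (by linarith) (by linarith)⟩
  · intro u hu t ht
    refine ⟨?_, hg1 t ht⟩
    rw [hu 0 ⟨le_refl 0, zero_le_one⟩ t (by linarith)]
    unfold Qg
    rw [if_neg (by linarith)]
    norm_num
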